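/- Let S, T, R be pairwise disjoint nonempty finite sets, let π, τ, ρ be partitions of S, T, R respectively, and let s, s' be two distinct elements of S. Then, in the free K-module on partitions, parallel associativity holds: (π ▷_s τ) ▷_{s'} ρ = (π ▷_{s'} ρ) ▷_s τ. -/

import Mathlib

variable {α : Type*} [DecidableEq α]

/-- A partition of a finite set `S`: a finite set of nonempty, pairwise disjoint
blocks whose union is `S`. -/
def IsSetPartition (π : Finset (Finset α)) (S : Finset α) : Prop :=
  (∀ B ∈ π, B.Nonempty) ∧
  (∀ B ∈ π, ∀ C ∈ π, B ≠ C → Disjoint B C) ∧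
  π.biUnion id = S

/-- The block of the partition `π` containing `s` (the union of all blocks
containing `s`, which is the unique such block when `π` is a partition). -/
def blockOf (π : Finset (Finset α)) (s : α) : Finset α :=
  π.biUnion (fun B => if s ∈ B then B else ∅)

/-- The NPL partial composition of set partitions,
`π ▷_s τ := Σ_{C ∈ τ} [(π \ {B_s}) ∪ {(B_s \ {s}) ∪ C} ∪ (τ \ {C})]`, taken in
the free `K`-module on set partitions. -/
noncomputable def pComp (K : Type*) [CommRing K] (s : α)
    (π τ : Finset (Finset α)) : Finset (Finset α) →₀ K :=
  ∑ C ∈ τ, Finsupp.single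
    (insert ((blockOf π s \ {s}) ∪ C) (π.erase (blockOf π s) ∪ τ.erase C)) 1

/-- The bilinear extension of `▷_s` to the free `K`-module on set partitions. -/
noncomputable def pCompL (K : Type*) [CommRing K] (s : α)
    (x y : Finset (Finset α) →₀ K) : Finset (Finset α) →₀ K :=
  x.sum fun π a => y.sum fun τ b => (a * b) • pComp K s π τ

/-!
Both sides expand into a sum over pairs `(C, D) ∈ τ × ρ` of single partitions, and the two
partitions indexed by the same pair coincide. If `s` and `s'` lie in a common block `B` of `π`,
both are `B ∖ {s, s'} ∪ C ∪ D` together with the untouched blocks; otherwise `C` is grafted onto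
the block of `s` and `D` onto the block of `s'` independently, in either order.
-/

open Finset

lemma blockOf_eq_of_forall {π : Finset (Finset α)} {s : α} {B : Finset α}
    (hB : B ∈ π) (hs : s ∈ B) (huniq : ∀ C ∈ π, s ∈ C → C = B) :
    blockOf π s = B := by
  ext x
  simp only [blockOf, mem_biUnion]
  refine ⟨fun ⟨C, hC, hx⟩ => ?_, fun hx => ⟨B, hB, by simp [hs, hx]⟩⟩
  split_ifs at hx with h
  · exact huniq C hC h ▸ hx
  · simp at hx

namespace IsSetPartition

variable {π : Finset (Finset α)} {S : Finset α}

lemma subset_of_mem (hπ : IsSetPartition π S) {B : Finset α} (hB : B ∈ π) : B ⊆ S :=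
  hπ.2.2 ▸ subset_biUnion_of_mem id hB

lemma eq_of_mem_of_mem (hπ : IsSetPartition π S) {B C : Finset α} (hB : B ∈ π) (hC : C ∈ π)
    {x : α} (hxB : x ∈ B) (hxC : x ∈ C) : B = C := by
  by_contra hne
  exact disjoint_left.mp (hπ.2.1 B hB C hC hne) hxB hxC

lemma exists_mem (hπ : IsSetPartition π S) {s : α} (hs : s ∈ S) : ∃ B ∈ π, s ∈ B := by
  simpa [← hπ.2.2] using hs

lemma blockOf_eq (hπ : IsSetPartition π S) {B : Finset α} (hB : B ∈ π) {s : α} (hs : s ∈ B) :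
    blockOf π s = B :=
  blockOf_eq_of_forall hB hs fun _ hC hsC => hπ.eq_of_mem_of_mem hC hB hsC hs

lemma blockOf_mem (hπ : IsSetPartition π S) {s : α} (hs : s ∈ S) : blockOf π s ∈ π := by
  obtain ⟨B, hB, hsB⟩ := hπ.exists_mem hs
  rwa [hπ.blockOf_eq hB hsB]

lemma mem_blockOf (hπ : IsSetPartition π S) {s : α} (hs : s ∈ S) : s ∈ blockOf π s := by
  obtain ⟨B, hB, hsB⟩ := hπ.exists_mem hs
  rwa [hπ.blockOf_eq hB hsB]

lemma notMem_of_disjoint (hπ : IsSetPartition π S) {T : Finset α} (hST : Disjoint S T)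
    {B : Finset α} (hB : B ∈ π) {t : α} (ht : t ∈ T) : t ∉ B :=
  fun htB => disjoint_left.mp hST (hπ.subset_of_mem hB htB) ht

end IsSetPartition

def graft (s : α) (π τ : Finset (Finset α)) (C : Finset α) : Finset (Finset α) :=
  insert ((blockOf π s \ {s}) ∪ C) (π.erase (blockOf π s) ∪ τ.erase C)

lemma pComp_eq_sum_graft (K : Type*) [CommRing K] (s : α) (π τ : Finset (Finset α)) :
    pComp K s π τ = ∑ C ∈ τ, Finsupp.single (graft s π τ C) 1 :=
  rfl

lemma pCompL_single_one (K : Type*) [CommRing K] (s : α) (x : Finset (Finset α) →₀ K)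
    (ρ : Finset (Finset α)) :
    pCompL K s x (Finsupp.single ρ 1) =
      Finsupp.linearCombination K (fun π => pComp K s π ρ) x := by
  simp [pCompL, Finsupp.linearCombination_apply]

lemma pCompL_pComp_single_one (K : Type*) [CommRing K] (s s' : α) (π τ ρ : Finset (Finset α)) :
    pCompL K s' (pComp K s π τ) (Finsupp.single ρ 1) =
      ∑ C ∈ τ, ∑ D ∈ ρ, Finsupp.single (graft s' (graft s π τ C) ρ D) 1 := by
  simp [pCompL_single_one, pComp_eq_sum_graft K s π τ, pComp_eq_sum_graft K s']

section graft

variable {S T : Finset α} {π τ : Finset (Finset α)} {s s' : α} {C : Finset α}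

lemma blockOf_graft_of_mem (hπ : IsSetPartition π S) (hτ : IsSetPartition τ T)
    (hST : Disjoint S T) (hs : s ∈ S) (hss' : s ≠ s') (hs'B : s' ∈ blockOf π s) :
    blockOf (graft s π τ C) s' = (blockOf π s \ {s}) ∪ C := by
  have hs'S : s' ∈ S := hπ.subset_of_mem (hπ.blockOf_mem hs) hs'B
  refine blockOf_eq_of_forall (mem_insert_self _ _) (by simp [hs'B, hss'.symm]) ?_
  simp only [graft, mem_insert, mem_union]
  rintro B (rfl | hB | hB) hs'B'
  · rfl
  · exact absurd (hπ.eq_of_mem_of_mem (mem_of_mem_erase hB) (hπ.blockOf_mem hs) hs'B' hs'B)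
      (ne_of_mem_erase hB)
  · exact absurd hs'B' (hτ.notMem_of_disjoint hST.symm (mem_of_mem_erase hB) hs'S)

lemma blockOf_graft_of_notMem (hπ : IsSetPartition π S) (hτ : IsSetPartition τ T)
    (hST : Disjoint S T) (hs' : s' ∈ S) (hC : C ∈ τ) (hs'B : s' ∉ blockOf π s) :
    blockOf (graft s π τ C) s' = blockOf π s' := by
  have hs'B' := hπ.mem_blockOf hs'
  have hne : blockOf π s' ≠ blockOf π s := fun h => hs'B (h ▸ hs'B')
  refine blockOf_eq_of_forall (by simp [graft, hne, hπ.blockOf_mem hs']) hs'B' ?_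
  simp only [graft, mem_insert, mem_union]
  rintro B (rfl | hB | hB) hs'B''
  · simp [hs'B, hτ.notMem_of_disjoint hST.symm hC hs'] at hs'B''
  · exact (hπ.blockOf_eq (mem_of_mem_erase hB) hs'B'').symm
  · exact absurd hs'B'' (hτ.notMem_of_disjoint hST.symm (mem_of_mem_erase hB) hs')

lemma graft_graft_of_mem (hπ : IsSetPartition π S) (hτ : IsSetPartition τ T)
    (hST : Disjoint S T) (hs : s ∈ S) (hss' : s ≠ s') (hC : C ∈ τ)
    (hs'B : s' ∈ blockOf π s) (ρ : Finset (Finset α)) (D : Finset α) :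
    graft s' (graft s π τ C) ρ D =
      insert (blockOf π s \ {s, s'} ∪ C ∪ D)
        (π.erase (blockOf π s) ∪ τ.erase C ∪ ρ.erase D) := by
  have hs'S : s' ∈ S := hπ.subset_of_mem (hπ.blockOf_mem hs) hs'B
  have hs'C : s' ∉ C := hτ.notMem_of_disjoint hST.symm hC hs'S
  -- the grafted block meets both `T` (in `C`) and `S` (at `s'`)
  have hnew : blockOf π s \ {s} ∪ C ∉ π.erase (blockOf π s) ∪ τ.erase C := by
    obtain ⟨t, ht⟩ := hτ.1 C hC
    simp only [mem_union]
    rintro (h | h)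
    · exact hπ.notMem_of_disjoint hST (mem_of_mem_erase h) (hτ.subset_of_mem hC ht)
        (mem_union_right _ ht)
    · exact hτ.notMem_of_disjoint hST.symm (mem_of_mem_erase h) hs'S
        (mem_union_left _ (by simp [hs'B, hss'.symm]))
  rw [graft, blockOf_graft_of_mem hπ hτ hST hs hss' hs'B, graft, erase_insert hnew,
    union_sdiff_distrib, sdiff_singleton_eq_erase s' C, erase_eq_of_notMem hs'C,
    sdiff_sdiff_left, sup_eq_union, ← insert_eq]

lemma graft_graft_of_notMem (hπ : IsSetPartition π S) (hτ : IsSetPartition τ T)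
    (hST : Disjoint S T) (hs' : s' ∈ S) (hC : C ∈ τ) (hs'B : s' ∉ blockOf π s)
    (ρ : Finset (Finset α)) (D : Finset α) :
    graft s' (graft s π τ C) ρ D =
      insert (blockOf π s' \ {s'} ∪ D) (insert (blockOf π s \ {s} ∪ C)
        ((π.erase (blockOf π s)).erase (blockOf π s') ∪ τ.erase C ∪ ρ.erase D)) := by
  have hs'B' := hπ.mem_blockOf hs'
  have hnew : blockOf π s \ {s} ∪ C ≠ blockOf π s' := by
    rintro h
    rw [← h] at hs'B'
    simp [hs'B, hτ.notMem_of_disjoint hST.symm hC hs'] at hs'B'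
  have hB'τ : blockOf π s' ∉ τ.erase C := fun h =>
    hτ.notMem_of_disjoint hST.symm (mem_of_mem_erase h) hs' hs'B'
  rw [graft, blockOf_graft_of_notMem hπ hτ hST hs' hC hs'B, graft, erase_insert_of_ne hnew,
    erase_union_distrib, erase_eq_of_notMem hB'τ, insert_union]

end graft

lemma graft_graft_comm {S T R : Finset α} {π τ ρ : Finset (Finset α)}
    (hπ : IsSetPartition π S) (hτ : IsSetPartition τ T) (hρ : IsSetPartition ρ R)
    (hST : Disjoint S T) (hSR : Disjoint S R) {s s' : α} (hs : s ∈ S) (hs' : s' ∈ S)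
    (hss' : s ≠ s') {C D : Finset α} (hC : C ∈ τ) (hD : D ∈ ρ) :
    graft s' (graft s π τ C) ρ D = graft s (graft s' π ρ D) τ C := by
  by_cases hs'B : s' ∈ blockOf π s
  · have hBB' : blockOf π s' = blockOf π s :=
      hπ.blockOf_eq (hπ.blockOf_mem hs) hs'B
    have hsB' : s ∈ blockOf π s' := hBB' ▸ hπ.mem_blockOf hs
    rw [graft_graft_of_mem hπ hτ hST hs hss' hC hs'B,
      graft_graft_of_mem hπ hρ hSR hs' hss'.symm hD hsB', hBB', pair_comm,
      union_right_comm, union_right_comm (π.erase _)]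
  · have hsB' : s ∉ blockOf π s' := fun h =>
      hs'B (hπ.blockOf_eq (hπ.blockOf_mem hs') h ▸ hπ.mem_blockOf hs')
    rw [graft_graft_of_notMem hπ hτ hST hs' hC hs'B,
      graft_graft_of_notMem hπ hρ hSR hs hD hsB', insert_comm, erase_right_comm,
      union_right_comm]

theorem pComp_parallel_assoc_general (K : Type*) [CommRing K]
    (S T R : Finset α) (π τ ρ : Finset (Finset α))
    (hπ : IsSetPartition π S) (hτ : IsSetPartition τ T) (hρ : IsSetPartition ρ R)
    (hST : Disjoint S T) (hSR : Disjoint S R)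
    (s s' : α) (hs : s ∈ S) (hs' : s' ∈ S) (hss' : s ≠ s') :
    pCompL K s' (pComp K s π τ) (Finsupp.single ρ 1) =
      pCompL K s (pComp K s' π ρ) (Finsupp.single τ 1) := by
  rw [pCompL_pComp_single_one, pCompL_pComp_single_one, sum_comm (s := ρ)]
  exact sum_congr rfl fun C hC => sum_congr rfl fun D hD => by
    rw [graft_graft_comm hπ hτ hρ hST hSR hs hs' hss' hC hD]

/-- Parallel associativity `(π ▷_s τ) ▷_{s'} ρ = (π ▷_{s'} ρ) ▷_s τ`
for the NPL-operad structure on the species of set partitions (the instance for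
`Com₊` of the NPL-operad structure on `E ∘ q`). -/
theorem pComp_parallel_assoc (K : Type*) [CommRing K]
    (S T R : Finset α) (π τ ρ : Finset (Finset α))
    (hπ : IsSetPartition π S) (hτ : IsSetPartition τ T) (hρ : IsSetPartition ρ R)
    (hS : S.Nonempty) (hT : T.Nonempty) (hR : R.Nonempty)
    (hST : Disjoint S T) (hSR : Disjoint S R) (hTR : Disjoint T R)
    (s s' : α) (hs : s ∈ S) (hs' : s' ∈ S) (hss' : s ≠ s') :
    pCompL K s' (pComp K s π τ) (Finsupp.single ρ 1) =
      pCompL K s (pComp K s' π ρ) (Finsupp.single τ 1) :=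
  pComp_parallel_assoc_general K S T R π τ ρ hπ hτ hρ hST hSR s s' hs hs' hss'
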